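/- arXiv:2211.11117 — 2 statements merged into one kernel-verified Lean document; each statement's English description precedes it below -/
import Mathlib

section
/- The contraction C_{g,q} is the inverse of the dilation D_{f,q} when g = 𝒟_q f: that is, C_{g,q}(D_{f,q}(x)) = x for all x ∈ ℝ. -/
open MeasureTheory Filter Topology

/-- The mass function `σ_f(x) = ∬ r f(x,v,r) dv dr` of a density `f` on position–velocity–length
space (written in curried form `f x v r`). -/
noncomputable def sigmaF (f : ℝ → ℝ → ℝ → ℝ) (x : ℝ) : ℝ :=
  ∫ p : ℝ × ℝ, p.2 * f x p.1 p.2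

/-- The class `𝓛` of dominating profiles: nonnegative `γ(v,r)` with
`∬ (v² + r² + 1) γ(v,r) dv dr < ∞`. -/
def MemL (γ : ℝ → ℝ → ℝ) : Prop :=
  (∀ v r : ℝ, 0 ≤ γ v r) ∧
  Integrable (fun p : ℝ × ℝ => (p.1 ^ 2 + p.2 ^ 2 + 1) * γ p.1 p.2)

/-- The class `𝓕_γ`: nonnegative measurable densities `f(x,v,r)`, `C¹` in `x`, with `f` and
`∂ₓ f` dominated by `γ(v,r)`. -/
def MemFgamma (f : ℝ → ℝ → ℝ → ℝ) (γ : ℝ → ℝ → ℝ) : Prop :=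
  Measurable (fun p : ℝ × ℝ × ℝ => f p.1 p.2.1 p.2.2) ∧
  (∀ x v r : ℝ, 0 ≤ f x v r) ∧
  (∀ v r : ℝ, ContDiff ℝ 1 fun x => f x v r) ∧
  (∀ x v r : ℝ, f x v r ≤ γ v r) ∧
  (∀ x v r : ℝ, |deriv (fun x' => f x' v r) x| ≤ γ v r)

/-- The class `𝓕` of admissible densities: `f ∈ 𝓕_γ` for some `γ ∈ 𝓛`, with everywhere
positive mass function `σ_f`. -/
def MemF (f : ℝ → ℝ → ℝ → ℝ) : Prop :=
  (∃ γ, MemL γ ∧ MemFgamma f γ) ∧ ∀ x : ℝ, 0 < sigmaF f x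

/-- The class `𝓖` of dilated densities: `g ∈ 𝓕` with `‖σ_g‖_∞ < 1`. -/
def MemG (g : ℝ → ℝ → ℝ → ℝ) : Prop :=
  MemF g ∧ ∃ c : ℝ, c < 1 ∧ ∀ x : ℝ, sigmaF g x ≤ c

/-- The dilation function `D_{f,a}(b) = b + ∫_a^b σ_f(x) dx`. -/
noncomputable def Dfun (f : ℝ → ℝ → ℝ → ℝ) (a b : ℝ) : ℝ :=
  b + ∫ x in a..b, sigmaF f x

/-- The contraction function `C_{g,a}(b) = b - ∫_a^b σ_g(y) dy`. -/
noncomputable def Cfun (g : ℝ → ℝ → ℝ → ℝ) (a b : ℝ) : ℝ :=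
  b - ∫ x in a..b, sigmaF g x

/-- The dilation operator `𝒟_q f (y,v,r) = f(D_{f,q}⁻¹(y),v,r) / (1 + σ_f(D_{f,q}⁻¹(y)))`. -/
noncomputable def Dop (f : ℝ → ℝ → ℝ → ℝ) (q : ℝ) : ℝ → ℝ → ℝ → ℝ :=
  fun y v r =>
    f (Function.invFun (Dfun f q) y) v r / (1 + sigmaF f (Function.invFun (Dfun f q) y))

/-- The contraction operator `𝒞_q g (x,v,r) = g(C_{g,q}⁻¹(x),v,r) / (1 - σ_g(C_{g,q}⁻¹(x)))`. -/
noncomputable def Cop (g : ℝ → ℝ → ℝ → ℝ) (q : ℝ) : ℝ → ℝ → ℝ → ℝ :=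
  fun x v r =>
    g (Function.invFun (Cfun g q) x) v r / (1 - sigmaF g (Function.invFun (Cfun g q) x))

/-- The spatial shift operator `S_c h (x,v,r) = h(x - c, v, r)`. -/
def Sop (c : ℝ) (h : ℝ → ℝ → ℝ → ℝ) : ℝ → ℝ → ℝ → ℝ := fun x v r => h (x - c) v r

/-- The free (ideal gas) evolution `𝒯_t f (x,v,r) = f(x - v t, v, r)`. -/
def Tfree (t : ℝ) (f : ℝ → ℝ → ℝ → ℝ) : ℝ → ℝ → ℝ → ℝ := fun x v r => f (x - v * t) v r

/-- The mass flow `j_f⁺(x,v,t) = ∫_{w<v} ∫_x^{x+(v-w)t} ∫ r f(z,w,r) dr dz dw`: the mass with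
speed less than `v` crossing the trajectory `s ↦ x + v s` during `[0,t]`. -/
noncomputable def jplus (f : ℝ → ℝ → ℝ → ℝ) (x v t : ℝ) : ℝ :=
  ∫ w in Set.Iio v, (∫ z in x..(x + (v - w) * t), (∫ r : ℝ, r * f z w r))

/-- The mass flow `j_f⁻(x,v,t) = ∫_{w>v} ∫_{x+(v-w)t}^x ∫ r f(z,w,r) dr dz dw`: the mass with
speed greater than `v` crossing the trajectory `s ↦ x + v s` during `[0,t]`. -/
noncomputable def jminus (f : ℝ → ℝ → ℝ → ℝ) (x v t : ℝ) : ℝ :=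
  ∫ w in Set.Ioi v, (∫ z in (x + (v - w) * t)..x, (∫ r : ℝ, r * f z w r))

/-- The net mass flow `j_f = j_f⁺ - j_f⁻`. -/
noncomputable def jflow (f : ℝ → ℝ → ℝ → ℝ) (x v t : ℝ) : ℝ := jplus f x v t - jminus f x v t

/-- The macroscopic quasiparticle position `u_{g,v,t}(q) = q + v t + j_{𝒞_q g}(q,v,t)`. -/
noncomputable def uqp (g : ℝ → ℝ → ℝ → ℝ) (v t q : ℝ) : ℝ :=
  q + v * t + jflow (Cop g q) q v t

/-- The hard-rod evolution operator `𝒰_t g = S_{o_t} 𝒟_0 𝒯_t 𝒞_0 g` with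
`o_t = j_{𝒞_0 g}(0,0,t)`. -/
noncomputable def Uop (t : ℝ) (g : ℝ → ℝ → ℝ → ℝ) : ℝ → ℝ → ℝ → ℝ :=
  Sop (jflow (Cop g 0) 0 0 t) (Dop (Tfree t (Cop g 0)) 0)

/-! `D = D_{f,q}` is a strictly increasing bijection of `ℝ` with `D' = 1 + σ_f`, and
`σ_g ∘ D = σ_f / (1 + σ_f)`. Substituting `y = D u` therefore turns `∫_q^{D x} σ_g` into
`∫_q^x σ_f`, so `C_{g,q}(D x) = D x - ∫_q^x σ_f = x`. -/

theorem MemL.integrable_abs_snd_mul {γ : ℝ → ℝ → ℝ} (hγ : MemL γ) :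
    Integrable (fun p : ℝ × ℝ => |p.2| * γ p.1 p.2) := by
  have hw : ∀ p : ℝ × ℝ, 0 < p.1 ^ 2 + p.2 ^ 2 + 1 := fun p => by positivity
  -- `|r| γ = (|r| / (v² + r² + 1)) · (v² + r² + 1) γ`: bounded times integrable
  have hbdd : Integrable
      (fun p : ℝ × ℝ => |p.2| / (p.1 ^ 2 + p.2 ^ 2 + 1) * ((p.1 ^ 2 + p.2 ^ 2 + 1) * γ p.1 p.2)) :=
    hγ.2.bdd_mul (c := 1) ((continuous_abs.comp continuous_snd).div (by fun_prop)
      fun p => (hw p).ne').aestronglyMeasurable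
      (ae_of_all _ fun p => by
        rw [norm_div, Real.norm_eq_abs, abs_abs, Real.norm_of_nonneg (hw p).le,
          div_le_one (hw p)]
        nlinarith [sq_abs p.2, abs_nonneg p.2])
  refine hbdd.congr (ae_of_all _ fun p => ?_)
  field_simp [(hw p).ne']

theorem MemFgamma.continuous_sigmaF {f : ℝ → ℝ → ℝ → ℝ} {γ : ℝ → ℝ → ℝ} (hf : MemFgamma f γ)
    (hγ : MemL γ) : Continuous (sigmaF f) := by
  obtain ⟨hmeas, hf_nonneg, hf_smooth, hf_le, -⟩ := hf
  refine continuous_of_dominated (fun x => ?_) (fun x => ae_of_all _ fun p => ?_)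
    hγ.integrable_abs_snd_mul (ae_of_all _ fun p => ?_)
  · exact (measurable_snd.mul
      (hmeas.comp (measurable_const.prodMk measurable_id))).aestronglyMeasurable
  · rw [Real.norm_eq_abs, abs_mul, abs_of_nonneg (hf_nonneg x p.1 p.2)]
    exact mul_le_mul_of_nonneg_left (hf_le x p.1 p.2) (abs_nonneg _)
  · exact continuous_const.mul (hf_smooth p.1 p.2).continuous

theorem MemF.continuous_sigmaF {f : ℝ → ℝ → ℝ → ℝ} (hf : MemF f) : Continuous (sigmaF f) := by
  obtain ⟨⟨γ, hγ, hfγ⟩, -⟩ := hf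
  exact hfγ.continuous_sigmaF hγ

section Dilation

variable {f : ℝ → ℝ → ℝ → ℝ} {a : ℝ}

@[simp]
theorem Dfun_self : Dfun f a a = a := by
  simp [Dfun]

theorem hasDerivAt_Dfun (hσc : Continuous (sigmaF f)) (b : ℝ) :
    HasDerivAt (Dfun f a) (1 + sigmaF f b) b :=
  (hasDerivAt_id b).add (hσc.integral_hasStrictDerivAt a b).hasDerivAt

theorem self_le_Dfun (hσ : ∀ x, 0 ≤ sigmaF f x) {b : ℝ} (hb : a ≤ b) : b ≤ Dfun f a b :=
  le_add_of_nonneg_right (intervalIntegral.integral_nonneg hb fun x _ => hσ x)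

theorem Dfun_le_self (hσ : ∀ x, 0 ≤ sigmaF f x) {b : ℝ} (hb : b ≤ a) : Dfun f a b ≤ b := by
  rw [Dfun, intervalIntegral.integral_symm]
  exact add_le_of_nonpos_right
    (neg_nonpos.2 (intervalIntegral.integral_nonneg hb fun x _ => hσ x))

theorem strictMono_Dfun (hσc : Continuous (sigmaF f)) (hσ : ∀ x, 0 ≤ sigmaF f x) :
    StrictMono (Dfun f a) :=
  strictMono_of_deriv_pos fun b => by
    rw [(hasDerivAt_Dfun hσc b).deriv]
    linarith [hσ b]

theorem surjective_Dfun (hσc : Continuous (sigmaF f)) (hσ : ∀ x, 0 ≤ sigmaF f x) :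
    Function.Surjective (Dfun f a) :=
  Continuous.surjective
    (continuous_iff_continuousAt.2 fun b => (hasDerivAt_Dfun hσc b).continuousAt)
    (tendsto_atTop_mono' _ ((eventually_ge_atTop a).mono fun _ => self_le_Dfun hσ) tendsto_id)
    (tendsto_atBot_mono' _ ((eventually_le_atBot a).mono fun _ => Dfun_le_self hσ) tendsto_id)

theorem continuous_invFun_Dfun (hσc : Continuous (sigmaF f)) (hσ : ∀ x, 0 ≤ sigmaF f x) :
    Continuous (Function.invFun (Dfun f a)) := by
  have hmono := strictMono_Dfun (a := a) hσc hσ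
  have hsurj := surjective_Dfun (a := a) hσc hσ
  let e : ℝ ≃o ℝ := hmono.orderIsoOfSurjective _ hsurj
  have he : Function.invFun (Dfun f a) = e.symm :=
    funext fun y => hmono.injective <| by
      rw [Function.rightInverse_invFun hsurj y]
      exact (e.apply_symm_apply y).symm
  rw [he]
  exact e.symm.continuous

theorem sigmaF_Dop (y : ℝ) :
    sigmaF (Dop f a) y = sigmaF f (Function.invFun (Dfun f a) y) /
      (1 + sigmaF f (Function.invFun (Dfun f a) y)) := by
  simp only [sigmaF, Dop, mul_div_assoc', integral_div]

theorem continuous_sigmaF_Dop (hσc : Continuous (sigmaF f)) (hσ : ∀ x, 0 ≤ sigmaF f x) :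
    Continuous (sigmaF (Dop f a)) := by
  have hI := continuous_invFun_Dfun (a := a) hσc hσ
  simp only [funext sigmaF_Dop]
  exact (hσc.comp hI).div (continuous_const.add (hσc.comp hI)) fun y => by
    linarith [hσ (Function.invFun (Dfun f a) y)]

theorem integral_sigmaF_Dop_Dfun (hσc : Continuous (sigmaF f)) (hσ : ∀ x, 0 ≤ sigmaF f x)
    (b : ℝ) : ∫ y in a..Dfun f a b, sigmaF (Dop f a) y = ∫ x in a..b, sigmaF f x := by
  have hcov := intervalIntegral.integral_deriv_smul_comp (a := a) (b := b)
    (fun x _ => hasDerivAt_Dfun (a := a) hσc x) (continuous_const.add hσc).continuousOn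
    (continuous_sigmaF_Dop (a := a) hσc hσ)
  rw [Dfun_self] at hcov
  rw [← hcov]
  refine intervalIntegral.integral_congr fun x _ => ?_
  have hx : (1 : ℝ) + sigmaF f x ≠ 0 := by linarith [hσ x]
  simp only [Function.comp, smul_eq_mul, sigmaF_Dop,
    Function.leftInverse_invFun (strictMono_Dfun hσc hσ).injective x]
  field_simp

end Dilation

/-- The contraction `C_{g,q}` is the inverse of the dilation `D_{f,q}` when `g = 𝒟_q f`:
`C_{g,q}(D_{f,q}(x)) = x` for all `x`. -/
theorem stmt7 (f : ℝ → ℝ → ℝ → ℝ) (hf : MemF f) (q x : ℝ) :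
    Cfun (Dop f q) q (Dfun f q x) = x := by
  rw [Cfun, integral_sigmaF_Dop_Dfun hf.continuous_sigmaF (fun y => (hf.2 y).le), Dfun]
  ring
end

section
/- The operators 𝒟_q : 𝓕 → 𝓖 and 𝒞_q : 𝓖 → 𝓕 are mutually inverse bijections: 𝒞_q ∘ 𝒟_q = id on 𝓕 and 𝒟_q ∘ 𝒞_q = id on 𝓖. -/
/-!
Both operators push a density forward along a dilation `b ↦ b + ∫_q^b s` with `1 + s ≥ ε > 0`:
`𝒟_q f` along `D_{f,q}` (rate `s = σ_f`) and `𝒞_q g` along `C_{g,q}` (rate `s = -σ_g`).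
Pushing forward divides the mass function as well, `σ_{𝒟_q f} = σ_f / (1 + σ_f)` at the preimage,
so `1 - σ_{𝒟_q f} = (1 + σ_f ∘ D_{f,q}⁻¹)⁻¹` is the derivative of `D_{f,q}⁻¹`; as both fix `q`,
`C_{𝒟_q f, q} = D_{f,q}⁻¹` and the two push-forwards cancel. The same computation with `-σ_g`
gives `𝒟_q 𝒞_q g = g`.

For the classes: differentiating under the integral, dominated by `(v² + r² + 1) γ`, makes `σ_f`
a `C¹` function with `σ_f` and `σ_f'` bounded, and these bounds dominate the pushed-forward
density and its `x`-derivative by a multiple of `γ`.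
-/

open MeasureTheory Filter Topology

open Function intervalIntegral

theorem measurable_deriv_of_differentiable {α : Type*} [MeasurableSpace α] {F : α → ℝ → ℝ}
    (hF : ∀ x, Measurable fun a => F a x) (hd : ∀ a, Differentiable ℝ (F a)) (x : ℝ) :
    Measurable fun a => deriv (F a) x := by
  refine measurable_of_tendsto_metrizable
    (f := fun n a => ((n : ℝ)⁻¹)⁻¹ • (F a (x + (n : ℝ)⁻¹) - F a x))
    (fun n => ((hF _).sub (hF x)).const_mul _) (tendsto_pi_nhds.2 fun a => ?_)
  exact (hd a x).hasDerivAt.tendsto_slope_zero_right.comp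
    (tendsto_inv_atTop_nhdsGT_zero.comp tendsto_natCast_atTop_atTop)

section Mass

variable {γ : ℝ → ℝ → ℝ} {f : ℝ → ℝ → ℝ → ℝ}

def weight (γ : ℝ → ℝ → ℝ) (p : ℝ × ℝ) : ℝ := (p.1 ^ 2 + p.2 ^ 2 + 1) * γ p.1 p.2

theorem abs_snd_mul_le_weight {h : ℝ × ℝ → ℝ} (hh : ∀ p, |h p| ≤ γ p.1 p.2) (p : ℝ × ℝ) :
    ‖p.2 * h p‖ ≤ weight γ p := by
  have hr : |p.2| ≤ p.1 ^ 2 + p.2 ^ 2 + 1 := by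
    nlinarith [sq_abs p.2, sq_nonneg (|p.2| - 1), sq_nonneg p.1]
  rw [Real.norm_eq_abs, abs_mul]
  exact mul_le_mul hr (hh p) (abs_nonneg _) (by positivity)

theorem MemL.integrable_snd_mul (hγ : MemL γ) {h : ℝ × ℝ → ℝ} (hm : Measurable h)
    (hh : ∀ p, |h p| ≤ γ p.1 p.2) : Integrable fun p : ℝ × ℝ => p.2 * h p :=
  hγ.2.mono' (measurable_snd.mul hm).aestronglyMeasurable
    (.of_forall (abs_snd_mul_le_weight hh))

theorem MemL.abs_integral_snd_mul_le (hγ : MemL γ) {h : ℝ × ℝ → ℝ}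
    (hh : ∀ p, |h p| ≤ γ p.1 p.2) : |∫ p : ℝ × ℝ, p.2 * h p| ≤ ∫ p, weight γ p :=
  norm_integral_le_of_norm_le hγ.2 (.of_forall (abs_snd_mul_le_weight hh))

theorem MemL.const_mul (hγ : MemL γ) {C : ℝ} (hC : 0 ≤ C) : MemL fun v r => C * γ v r :=
  ⟨fun v r => mul_nonneg hC (hγ.1 v r), by
    simpa only [mul_left_comm] using hγ.2.const_mul C⟩

namespace MemFgamma

theorem abs_le (hf : MemFgamma f γ) (x v r : ℝ) : |f x v r| ≤ γ v r :=
  (abs_of_nonneg (hf.2.1 x v r)).trans_le (hf.2.2.2.1 x v r)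

theorem differentiable (hf : MemFgamma f γ) (v r : ℝ) : Differentiable ℝ fun x => f x v r :=
  (hf.2.2.1 v r).differentiable one_ne_zero

theorem measurable_slice (hf : MemFgamma f γ) (x : ℝ) :
    Measurable fun p : ℝ × ℝ => f x p.1 p.2 :=
  hf.1.comp (measurable_const.prodMk measurable_id)

theorem measurable_deriv_slice (hf : MemFgamma f γ) (x : ℝ) :
    Measurable fun p : ℝ × ℝ => deriv (fun x' => f x' p.1 p.2) x :=
  measurable_deriv_of_differentiable (F := fun (p : ℝ × ℝ) x' => f x' p.1 p.2)
    hf.measurable_slice (fun p : ℝ × ℝ => hf.differentiable p.1 p.2) x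

theorem hasDerivAt_sigmaF (hf : MemFgamma f γ) (hγ : MemL γ) (x : ℝ) :
    HasDerivAt (sigmaF f) (∫ p : ℝ × ℝ, p.2 * deriv (fun x' => f x' p.1 p.2) x) x :=
  (hasDerivAt_integral_of_dominated_loc_of_deriv_le (x₀ := x) univ_mem
    (.of_forall fun x' => (measurable_snd.mul (hf.measurable_slice x')).aestronglyMeasurable)
    (hγ.integrable_snd_mul (hf.measurable_slice x) fun p => hf.abs_le x p.1 p.2)
    (measurable_snd.mul (hf.measurable_deriv_slice x)).aestronglyMeasurable
    (.of_forall fun p x' _ => abs_snd_mul_le_weight (fun p => hf.2.2.2.2 x' p.1 p.2) p) hγ.2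
    (.of_forall fun p x' _ => ((hf.differentiable p.1 p.2 x').hasDerivAt).const_mul p.2)).2

theorem deriv_sigmaF (hf : MemFgamma f γ) (hγ : MemL γ) :
    deriv (sigmaF f) = fun x => ∫ p : ℝ × ℝ, p.2 * deriv (fun x' => f x' p.1 p.2) x :=
  funext fun x => (hf.hasDerivAt_sigmaF hγ x).deriv

theorem contDiff_sigmaF (hf : MemFgamma f γ) (hγ : MemL γ) : ContDiff ℝ 1 (sigmaF f) := by
  refine contDiff_one_iff_deriv.2
    ⟨fun x => (hf.hasDerivAt_sigmaF hγ x).differentiableAt, ?_⟩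
  rw [hf.deriv_sigmaF hγ]
  exact continuous_of_dominated
    (fun x => (measurable_snd.mul (hf.measurable_deriv_slice x)).aestronglyMeasurable)
    (fun x => .of_forall (abs_snd_mul_le_weight fun p => hf.2.2.2.2 x p.1 p.2)) hγ.2
    (.of_forall fun p => continuous_const.mul ((hf.2.2.1 p.1 p.2).continuous_deriv le_rfl))

theorem abs_sigmaF_le (hf : MemFgamma f γ) (hγ : MemL γ) (x : ℝ) :
    |sigmaF f x| ≤ ∫ p, weight γ p :=
  hγ.abs_integral_snd_mul_le fun p => hf.abs_le x p.1 p.2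

theorem abs_deriv_sigmaF_le (hf : MemFgamma f γ) (hγ : MemL γ) (x : ℝ) :
    |deriv (sigmaF f) x| ≤ ∫ p, weight γ p := by
  rw [hf.deriv_sigmaF hγ]
  exact hγ.abs_integral_snd_mul_le fun p => hf.2.2.2.2 x p.1 p.2

end MemFgamma

theorem MemF.exists_sigmaF_bound (hf : MemF f) :
    ∃ M, ContDiff ℝ 1 (sigmaF f) ∧ ∀ x, |sigmaF f x| ≤ M ∧ |deriv (sigmaF f) x| ≤ M := by
  obtain ⟨⟨γ, hγ, hfγ⟩, -⟩ := hf
  exact ⟨_, hfγ.contDiff_sigmaF hγ,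
    fun x => ⟨hfγ.abs_sigmaF_le hγ x, hfγ.abs_deriv_sigmaF_le hγ x⟩⟩

end Mass

section Dilation

noncomputable def dilation (s : ℝ → ℝ) (q b : ℝ) : ℝ := b + ∫ x in q..b, s x

noncomputable def dilationInv (s : ℝ → ℝ) (q : ℝ) : ℝ → ℝ := invFun (dilation s q)

variable {s t : ℝ → ℝ} {q ε : ℝ}

@[simp] theorem dilation_self : dilation s q q = q := by simp [dilation]

theorem hasDerivAt_dilation (hs : Continuous s) (b : ℝ) :
    HasDerivAt (dilation s q) (1 + s b) b :=
  (hasDerivAt_id b).add (hs.integral_hasStrictDerivAt q b).hasDerivAt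

theorem continuous_dilation (hs : Continuous s) : Continuous (dilation s q) :=
  continuous_iff_continuousAt.2 fun b => (hasDerivAt_dilation hs b).continuousAt

theorem monotone_dilation_sub_mul (hs : Continuous s) (hsε : ∀ x, ε ≤ 1 + s x) :
    Monotone fun b => dilation s q b - ε * b := by
  have h (b : ℝ) : HasDerivAt (fun b => dilation s q b - ε * b) (1 + s b - ε * 1) b :=
    (hasDerivAt_dilation hs b).sub ((hasDerivAt_id b).const_mul ε)
  exact monotone_of_deriv_nonneg (fun b => (h b).differentiableAt) fun b => by
    rw [(h b).deriv]
    linarith [hsε b]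

theorem strictMono_dilation (hs : Continuous s) (hε : 0 < ε) (hsε : ∀ x, ε ≤ 1 + s x) :
    StrictMono (dilation s q) :=
  strictMono_of_deriv_pos fun b => by
    rw [(hasDerivAt_dilation hs b).deriv]
    linarith [hsε b]

theorem surjective_dilation (hs : Continuous s) (hε : 0 < ε) (hsε : ∀ x, ε ≤ 1 + s x) :
    Surjective (dilation s q) := by
  have hmono := monotone_dilation_sub_mul (q := q) hs hsε
  refine (continuous_dilation hs).surjective ?_ ?_
  · refine tendsto_atTop_mono' _ ((eventually_ge_atTop q).mono fun b hb => ?_)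
      (tendsto_atTop_add_const_left _ (q - ε * q) (tendsto_id.const_mul_atTop hε))
    have := hmono hb
    simp only [dilation_self, id] at this ⊢
    linarith
  · refine tendsto_atBot_mono' _ ((eventually_le_atBot q).mono fun b hb => ?_)
      (tendsto_atBot_add_const_left _ (q - ε * q) (tendsto_id.const_mul_atBot hε))
    have := hmono hb
    simp only [dilation_self, id] at this ⊢
    linarith

theorem dilation_dilationInv (hs : Continuous s) (hε : 0 < ε) (hsε : ∀ x, ε ≤ 1 + s x)
    (y : ℝ) : dilation s q (dilationInv s q y) = y :=
  invFun_eq (surjective_dilation hs hε hsε y)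

theorem dilationInv_dilation (hs : Continuous s) (hε : 0 < ε) (hsε : ∀ x, ε ≤ 1 + s x)
    (b : ℝ) : dilationInv s q (dilation s q b) = b :=
  leftInverse_invFun (strictMono_dilation hs hε hsε).injective b

theorem dilationInv_self (hs : Continuous s) (hε : 0 < ε) (hsε : ∀ x, ε ≤ 1 + s x) :
    dilationInv s q q = q := by
  simpa using dilationInv_dilation (q := q) hs hε hsε q

theorem continuous_dilationInv (hs : Continuous s) (hε : 0 < ε) (hsε : ∀ x, ε ≤ 1 + s x) :
    Continuous (dilationInv s q) := by
  refine Monotone.continuous_of_surjective (fun y y' hyy' => ?_)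
    fun b => ⟨_, dilationInv_dilation hs hε hsε b⟩
  rwa [← (strictMono_dilation hs hε hsε).le_iff_le, dilation_dilationInv hs hε hsε,
    dilation_dilationInv hs hε hsε]

theorem hasDerivAt_dilationInv (hs : Continuous s) (hε : 0 < ε) (hsε : ∀ x, ε ≤ 1 + s x)
    (y : ℝ) : HasDerivAt (dilationInv s q) (1 + s (dilationInv s q y))⁻¹ y :=
  .of_local_left_inverse (continuous_dilationInv hs hε hsε).continuousAt
    (hasDerivAt_dilation hs _) (by linarith [hsε (dilationInv s q y)])
    (.of_forall (dilation_dilationInv hs hε hsε))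

theorem continuous_inv_one_add_comp_dilationInv (hs : Continuous s) (hε : 0 < ε)
    (hsε : ∀ x, ε ≤ 1 + s x) : Continuous fun y => (1 + s (dilationInv s q y))⁻¹ :=
  Continuous.inv₀ (f := fun y => 1 + s (dilationInv s q y))
    (continuous_const.add (hs.comp (continuous_dilationInv hs hε hsε)))
    fun y => by linarith [hsε (dilationInv s q y)]

theorem contDiff_dilationInv (hs : Continuous s) (hε : 0 < ε) (hsε : ∀ x, ε ≤ 1 + s x) :
    ContDiff ℝ 1 (dilationInv s q) := by
  refine contDiff_one_iff_deriv.2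
    ⟨fun y => (hasDerivAt_dilationInv hs hε hsε y).differentiableAt, ?_⟩
  rw [show deriv (dilationInv s q) = _ from
    funext fun y => (hasDerivAt_dilationInv hs hε hsε y).deriv]
  exact continuous_inv_one_add_comp_dilationInv hs hε hsε

/-- `dilationInv s q` fixes `q` and has derivative `(1 + s ∘ dilationInv s q)⁻¹ = 1 + t`. -/
theorem dilation_eq_dilationInv (hs : Continuous s) (hε : 0 < ε) (hsε : ∀ x, ε ≤ 1 + s x)
    (ht : ∀ y, 1 + t y = (1 + s (dilationInv s q y))⁻¹) :
    dilation t q = dilationInv s q := by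
  have htc : Continuous t := by
    rw [show t = fun y => (1 + s (dilationInv s q y))⁻¹ - 1 from
      funext fun y => by rw [← ht]; ring]
    exact (continuous_inv_one_add_comp_dilationInv hs hε hsε).sub continuous_const
  funext y
  have hftc := integral_eq_sub_of_hasDerivAt (f' := fun x => 1 + t x) (a := q) (b := y)
    (fun x _ => (ht x).symm ▸ hasDerivAt_dilationInv (q := q) hs hε hsε x)
    ((continuous_const.add htc).intervalIntegrable q y)
  rw [integral_add intervalIntegrable_const (htc.intervalIntegrable q y),
    intervalIntegral.integral_const,
    dilationInv_self hs hε hsε] at hftc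
  simp only [dilation, smul_eq_mul, mul_one] at hftc ⊢
  linarith

theorem invFun_dilationInv (hs : Continuous s) (hε : 0 < ε) (hsε : ∀ x, ε ≤ 1 + s x) :
    invFun (dilationInv s q) = dilation s q := by
  funext b
  have hinj : Injective (dilationInv s q) :=
    LeftInverse.injective (dilation_dilationInv hs hε hsε)
  rw [← leftInverse_invFun hinj (dilation s q b), dilationInv_dilation hs hε hsε]

end Dilation

section PushDensity

/-- The push-forward of the density `f` under `dilation s q`, whose derivative is `1 + s`. -/
noncomputable def pushDensity (f : ℝ → ℝ → ℝ → ℝ) (s : ℝ → ℝ) (q : ℝ) : ℝ → ℝ → ℝ → ℝ :=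
  fun y v r => f (dilationInv s q y) v r / (1 + s (dilationInv s q y))

variable {f g : ℝ → ℝ → ℝ → ℝ} {γ : ℝ → ℝ → ℝ} {s t : ℝ → ℝ} {q ε M : ℝ}

theorem Dop_eq_pushDensity : Dop f q = pushDensity f (sigmaF f) q := rfl

theorem Cop_eq_pushDensity : Cop g q = pushDensity g (-sigmaF g) q := by
  have hC : Cfun g q = dilation (-sigmaF g) q := funext fun b => by
    simp [Cfun, dilation, intervalIntegral.integral_neg, sub_eq_add_neg]
  funext y v r
  simp only [Cop, pushDensity, dilationInv, hC, Pi.neg_apply, sub_eq_add_neg]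

theorem sigmaF_pushDensity (y : ℝ) :
    sigmaF (pushDensity f s q) y
      = sigmaF f (dilationInv s q y) / (1 + s (dilationInv s q y)) := by
  simp only [sigmaF, pushDensity, mul_div_assoc', MeasureTheory.integral_div]

theorem pushDensity_pushDensity (hs : Continuous s) (hε : 0 < ε) (hsε : ∀ x, ε ≤ 1 + s x)
    (ht : ∀ y, 1 + t y = (1 + s (dilationInv s q y))⁻¹) :
    pushDensity (pushDensity f s q) t q = f := by
  have hinv : dilationInv t q = dilation s q := by
    rw [dilationInv, dilation_eq_dilationInv hs hε hsε ht, invFun_dilationInv hs hε hsε]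
  funext x v r
  have hne : 1 + s x ≠ 0 := by linarith [hsε x]
  simp only [pushDensity, hinv, ht, dilationInv_dilation hs hε hsε]
  rw [div_inv_eq_mul, div_mul_cancel₀ _ hne]

theorem hasDerivAt_pushDensity (hf : ∀ v r, Differentiable ℝ fun x => f x v r)
    (hs : ContDiff ℝ 1 s) (hε : 0 < ε) (hsε : ∀ x, ε ≤ 1 + s x) (y v r : ℝ) :
    HasDerivAt (fun y => pushDensity f s q y v r)
      ((deriv (fun x => f x v r) (dilationInv s q y)
          - f (dilationInv s q y) v r * deriv s (dilationInv s q y)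
            / (1 + s (dilationInv s q y)))
        / (1 + s (dilationInv s q y)) ^ 2) y := by
  have hφ := hasDerivAt_dilationInv (q := q) hs.continuous hε hsε y
  have hne : 1 + s (dilationInv s q y) ≠ 0 := by linarith [hsε (dilationInv s q y)]
  have hnum := (hf v r (dilationInv s q y)).hasDerivAt.comp y hφ
  have hden :=
    ((hs.differentiable one_ne_zero (dilationInv s q y)).hasDerivAt.comp y hφ).const_add 1
  refine (hnum.div hden hne).congr_deriv ?_
  simp only [comp_apply]
  field_simp

theorem MemFgamma.pushDensity (hf : MemFgamma f γ) (hs : ContDiff ℝ 1 s)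
    (hs' : ∀ x, |deriv s x| ≤ M) (hε : 0 < ε) (hsε : ∀ x, ε ≤ 1 + s x) :
    MemFgamma (pushDensity f s q) fun v r => (ε⁻¹ + (1 + M * ε⁻¹) * ε⁻¹ ^ 2) * γ v r := by
  have hφ := contDiff_dilationInv (q := q) hs.continuous hε hsε
  have hpos (x : ℝ) : 0 < 1 + s x := hε.trans_le (hsε x)
  have hγ (v r : ℝ) : 0 ≤ γ v r := (hf.2.1 0 v r).trans (hf.2.2.2.1 0 v r)
  have hM : 0 ≤ M := (abs_nonneg _).trans (hs' 0)
  refine ⟨?_, fun x v r => div_nonneg (hf.2.1 _ _ _) (hpos _).le, fun v r => ?_,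
    fun x v r => ?_, fun x v r => ?_⟩
  · exact (hf.1.comp ((hφ.continuous.measurable.comp measurable_fst).prodMk measurable_snd)).div
      ((continuous_const.add (hs.continuous.comp hφ.continuous)).measurable.comp measurable_fst)
  · exact ((hf.2.2.1 v r).comp hφ).div (contDiff_const.add (hs.comp hφ)) fun x => (hpos _).ne'
  · have h := div_le_div₀ (hγ v r) (hf.2.2.2.1 (dilationInv s q x) v r) hε
      (hsε (dilationInv s q x))
    have : 0 ≤ (1 + M * ε⁻¹) * ε⁻¹ ^ 2 * γ v r := mul_nonneg (by positivity) (hγ v r)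
    simp only [_root_.pushDensity, div_eq_mul_inv] at h ⊢
    linarith
  · rw [(hasDerivAt_pushDensity hf.differentiable hs hε hsε x v r).deriv]
    set b := dilationInv s q x
    have hnum : |deriv (fun x => f x v r) b - f b v r * deriv s b / (1 + s b)|
        ≤ γ v r + γ v r * M / ε := by
      refine (abs_sub _ _).trans ?_
      rw [abs_div, abs_mul, abs_of_pos (hpos b)]
      exact add_le_add (hf.2.2.2.2 b v r) (div_le_div₀ (mul_nonneg (hγ v r) hM)
        (mul_le_mul (hf.abs_le b v r) (hs' b) (abs_nonneg _) (hγ v r)) hε (hsε b))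
    have : 0 ≤ ε⁻¹ * γ v r := mul_nonneg (by positivity) (hγ v r)
    calc _ = |deriv (fun x => f x v r) b - f b v r * deriv s b / (1 + s b)| / (1 + s b) ^ 2 := by
          rw [abs_div, abs_of_pos (pow_pos (hpos b) 2)]
      _ ≤ (γ v r + γ v r * M / ε) / ε ^ 2 :=
          div_le_div₀ ((abs_nonneg _).trans hnum) hnum (by positivity)
            (pow_le_pow_left₀ hε.le (hsε b) 2)
      _ ≤ (ε⁻¹ + (1 + M * ε⁻¹) * ε⁻¹ ^ 2) * γ v r := by
          rw [div_eq_mul_inv, div_eq_mul_inv, ← inv_pow]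
          nlinarith

theorem MemF.pushDensity (hf : MemF f) (hs : ContDiff ℝ 1 s) (hs' : ∀ x, |deriv s x| ≤ M)
    (hε : 0 < ε) (hsε : ∀ x, ε ≤ 1 + s x) : MemF (pushDensity f s q) := by
  obtain ⟨⟨γ, hγ, hfγ⟩, hσ⟩ := hf
  have hM : 0 ≤ M := (abs_nonneg _).trans (hs' 0)
  refine ⟨⟨_, hγ.const_mul (by positivity), hfγ.pushDensity hs hs' hε hsε⟩, fun y => ?_⟩
  rw [sigmaF_pushDensity]
  exact div_pos (hσ _) (hε.trans_le (hsε _))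

end PushDensity

section DilationContraction

variable {f g : ℝ → ℝ → ℝ → ℝ} {q : ℝ}

theorem memG_Dop (hf : MemF f) : MemG (Dop f q) := by
  obtain ⟨M, hσ, hM⟩ := hf.exists_sigmaF_bound
  have hσpos := hf.2
  have hM0 : 0 ≤ M := (abs_nonneg _).trans (hM 0).1
  refine ⟨hf.pushDensity hσ (fun x => (hM x).2) one_pos fun x => by linarith [hσpos x],
    M / (1 + M), by rw [div_lt_one (by linarith)]; linarith, fun y => ?_⟩
  rw [Dop_eq_pushDensity, sigmaF_pushDensity]
  have ha := hσpos (dilationInv (sigmaF f) q y)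
  have haM := (le_abs_self _).trans (hM (dilationInv (sigmaF f) q y)).1
  rw [div_le_div_iff₀ (by linarith) (by linarith)]
  nlinarith

theorem memF_Cop (hg : MemG g) : MemF (Cop g q) := by
  obtain ⟨hgF, c, hc1, hc⟩ := hg
  obtain ⟨M, hσ, hM⟩ := hgF.exists_sigmaF_bound
  rw [Cop_eq_pushDensity]
  exact hgF.pushDensity hσ.neg (fun x => by rw [deriv.neg', abs_neg]; exact (hM x).2)
    (sub_pos.2 hc1) fun x => by simp only [Pi.neg_apply]; linarith [hc x]

theorem Cop_Dop (hf : MemF f) : Cop (Dop f q) q = f := by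
  obtain ⟨M, hσ, -⟩ := hf.exists_sigmaF_bound
  have hσpos := hf.2
  rw [Cop_eq_pushDensity, Dop_eq_pushDensity]
  refine pushDensity_pushDensity hσ.continuous one_pos (fun x => by linarith [hσpos x])
    fun y => ?_
  have hne : 1 + sigmaF f (dilationInv (sigmaF f) q y) ≠ 0 := by
    linarith [hσpos (dilationInv (sigmaF f) q y)]
  rw [Pi.neg_apply, sigmaF_pushDensity]
  field_simp
  ring

theorem Dop_Cop (hg : MemG g) : Dop (Cop g q) q = g := by
  obtain ⟨hgF, c, hc1, hc⟩ := hg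
  obtain ⟨M, hσ, -⟩ := hgF.exists_sigmaF_bound
  rw [Dop_eq_pushDensity, Cop_eq_pushDensity]
  refine pushDensity_pushDensity hσ.continuous.neg (sub_pos.2 hc1)
    (fun x => by simp only [Pi.neg_apply]; linarith [hc x]) fun y => ?_
  have hne : 1 + (-sigmaF g) (dilationInv (-sigmaF g) q y) ≠ 0 := by
    simp only [Pi.neg_apply]; linarith [hc (dilationInv (-sigmaF g) q y)]
  rw [sigmaF_pushDensity]
  field_simp
  simp only [Pi.neg_apply]
  ring

end DilationContraction

/-- The operators `𝒟_q : 𝓕 → 𝓖` and `𝒞_q : 𝓖 → 𝓕` are mutually inverse bijections: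
`𝒞_q ∘ 𝒟_q = id` on `𝓕` and `𝒟_q ∘ 𝒞_q = id` on `𝓖`. -/
theorem stmt8 (q : ℝ) :
    (∀ f, MemF f → MemG (Dop f q)) ∧
    (∀ g, MemG g → MemF (Cop g q)) ∧
    (∀ f, MemF f → ∀ x v r : ℝ, Cop (Dop f q) q x v r = f x v r) ∧
    (∀ g, MemG g → ∀ y v r : ℝ, Dop (Cop g q) q y v r = g y v r) :=
  ⟨fun _ hf => memG_Dop hf, fun _ hg => memF_Cop hg,
    fun _ hf x v r => by rw [Cop_Dop hf], fun _ hg y v r => by rw [Dop_Cop hg]⟩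
end
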